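/- Let X : H ← G be a groupoid correspondence, and let V₁, V₂ ⊆ X be slices. Then the set ⟨V₁|V₂⟩ := {⟨x₁|x₂⟩ : x₁ ∈ V₁, x₂ ∈ V₂, p(x₁) = p(x₂)} is a slice of the groupoid G (an open subset on which both r and s are injective), and for each g ∈ ⟨V₁|V₂⟩ the elements x₁ ∈ V₁, x₂ ∈ V₂ with g = ⟨x₁|x₂⟩ are unique. -/

import Mathlib

open Topology

/-- An étale topological groupoid, given by its arrow space `A` and object space `O`. -/
structure EtaleGroupoid (A O : Type) [TopologicalSpace A] [TopologicalSpace O] where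
  r : A → O
  s : A → O
  unit : O → A
  mul : A → A → A
  inv : A → A
  r_unit : ∀ o, r (unit o) = o
  s_unit : ∀ o, s (unit o) = o
  r_mul : ∀ g h, s g = r h → r (mul g h) = r g
  s_mul : ∀ g h, s g = r h → s (mul g h) = s h
  mul_assoc : ∀ g h k, s g = r h → s h = r k → mul (mul g h) k = mul g (mul h k)
  unit_mul : ∀ g, mul (unit (r g)) g = g
  mul_unit : ∀ g, mul g (unit (s g)) = g
  r_inv : ∀ g, r (inv g) = s g
  s_inv : ∀ g, s (inv g) = r g
  mul_inv : ∀ g, mul g (inv g) = unit (r g)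
  inv_mul : ∀ g, mul (inv g) g = unit (s g)
  etale_r : IsLocalHomeomorph r
  etale_s : IsLocalHomeomorph s
  continuous_mul : Continuous fun p : { p : A × A // s p.1 = r p.2 } => mul p.1.1 p.1.2
  continuous_inv : Continuous inv

variable {A O : Type} [TopologicalSpace A] [TopologicalSpace O]

/-- A right action of an étale groupoid on a topological space `X`. -/
structure RightAction (G : EtaleGroupoid A O) (X : Type) [TopologicalSpace X] where
  anchor : X → O
  act : X → A → X
  continuous_anchor : Continuous anchor
  continuous_act :
    Continuous fun p : { p : X × A // anchor p.1 = G.r p.2 } => act p.1.1 p.1.2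
  anchor_act : ∀ x g, anchor x = G.r g → anchor (act x g) = G.s g
  act_mul : ∀ x g h, anchor x = G.r g → G.s g = G.r h →
    act (act x g) h = act x (G.mul g h)
  act_unit : ∀ x, act x (G.unit (anchor x)) = x

/-- A left action of an étale groupoid on a topological space `X`. -/
structure LeftAction (G : EtaleGroupoid A O) (X : Type) [TopologicalSpace X] where
  anchor : X → O
  act : A → X → X
  continuous_anchor : Continuous anchor
  continuous_act :
    Continuous fun p : { p : A × X // G.s p.1 = anchor p.2 } => act p.1.1 p.1.2
  anchor_act : ∀ g x, G.s g = anchor x → anchor (act g x) = G.r g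
  mul_act : ∀ g h x, G.s g = G.r h → G.s h = anchor x →
    act g (act h x) = act (G.mul g h) x
  unit_act : ∀ x, act (G.unit (anchor x)) x = x

namespace RightAction

variable {G : EtaleGroupoid A O} {X : Type} [TopologicalSpace X]

/-- The map `(x, g) ↦ (x·g, x)` on the fibre product `X ×_{s,G⁰,r} G`. -/
def pairMap (ρ : RightAction G X) :
    { p : X × A // ρ.anchor p.1 = G.r p.2 } → X × X :=
  fun p => (ρ.act p.1.1 p.1.2, p.1.1)

/-- The action is *basic* if `pairMap` is a homeomorphism onto its image. -/
def IsBasic (ρ : RightAction G X) : Prop := Topology.IsEmbedding ρ.pairMap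

/-- The action is *free* if `pairMap` is injective. -/
def IsFree (ρ : RightAction G X) : Prop := Function.Injective ρ.pairMap

/-- The action is *proper* if `pairMap` is a proper map. -/
def IsProper (ρ : RightAction G X) : Prop := IsProperMap ρ.pairMap

/-- Two points are orbit equivalent if one is a translate of the other. -/
def OrbitRel (ρ : RightAction G X) (x y : X) : Prop :=
  ∃ g, ρ.anchor x = G.r g ∧ y = ρ.act x g

/-- The orbit space `X/G`, with the quotient topology. -/
def OrbitSpace (ρ : RightAction G X) : Type := Quot ρ.OrbitRel

instance (ρ : RightAction G X) : TopologicalSpace ρ.OrbitSpace :=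
  instTopologicalSpaceQuot

/-- The orbit space projection `p : X → X/G`. -/
def orbitMap (ρ : RightAction G X) : X → ρ.OrbitSpace := Quot.mk _

end RightAction

variable {AH OH : Type} [TopologicalSpace AH] [TopologicalSpace OH]

/-- A groupoid correspondence `X : H ← G`: commuting left `H`- and right `G`-actions
such that the right anchor map is a local homeomorphism and the right action is free
and proper. -/
structure Correspondence (H : EtaleGroupoid AH OH) (G : EtaleGroupoid A O)
    (X : Type) [TopologicalSpace X] where
  left : LeftAction H X
  right : RightAction G X
  sInv_left : ∀ h x, H.s h = left.anchor x →
    right.anchor (left.act h x) = right.anchor x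
  rInv_right : ∀ x g, right.anchor x = G.r g →
    left.anchor (right.act x g) = left.anchor x
  comm : ∀ h x g, H.s h = left.anchor x → right.anchor x = G.r g →
    left.act h (right.act x g) = right.act (left.act h x) g
  etale_s : IsLocalHomeomorph right.anchor
  free : right.IsFree
  proper : right.IsProper

namespace Correspondence

variable {H : EtaleGroupoid AH OH} {G : EtaleGroupoid A O}
  {X : Type} [TopologicalSpace X]

/-- The map `r_* : X/G → H⁰` induced by the left anchor map. -/
def rStar (C : Correspondence H G X) : C.right.OrbitSpace → OH :=
  Quot.lift C.left.anchor (by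
    rintro x y ⟨g, hg, rfl⟩
    exact (C.rInv_right x g hg).symm)

end Correspondence
section Statement18

variable {A O AH OH : Type} [TopologicalSpace A] [TopologicalSpace O]
  [TopologicalSpace AH] [TopologicalSpace OH]
  {H : EtaleGroupoid AH OH} {G : EtaleGroupoid A O}
  {X : Type} [TopologicalSpace X]

/-- A *slice* of a groupoid correspondence: an open subset on which both the
right anchor map `s` and the orbit projection `p` are injective. -/
def Correspondence.IsSlice (C : Correspondence H G X) (U : Set X) : Prop :=
  IsOpen U ∧ Set.InjOn C.right.anchor U ∧ Set.InjOn C.right.orbitMap U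

namespace RightAction

variable {G : EtaleGroupoid A O} (ρ : RightAction G X)

abbrev OrbitPairs : Type := { q : X × X // ρ.orbitMap q.1 = ρ.orbitMap q.2 }

variable {ρ}

theorem anchor_snd_eq_s {b : ρ.OrbitPairs → A}
    (hb : ∀ q, ρ.anchor q.1.1 = G.r (b q) ∧ q.1.2 = ρ.act q.1.1 (b q)) (q : ρ.OrbitPairs) :
    ρ.anchor q.1.2 = G.s (b q) := by
  rw [(hb q).2]
  exact ρ.anchor_act _ _ (hb q).1

/-- `r ⟨x₁|x₂⟩ = s(x₁)` recovers `x₁` from a slice, and then `x₂` is recovered from its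
orbit `p(x₂) = p(x₁)`. -/
theorem injOn_r_comp_bracket {b : ρ.OrbitPairs → A}
    (hb : ∀ q, ρ.anchor q.1.1 = G.r (b q) ∧ q.1.2 = ρ.act q.1.1 (b q))
    {V₁ V₂ : Set X} (hV₁ : Set.InjOn ρ.anchor V₁) (hV₂ : Set.InjOn ρ.orbitMap V₂) :
    Set.InjOn (G.r ∘ b) (Subtype.val ⁻¹' V₁ ×ˢ V₂) := by
  rintro q ⟨hq₁, hq₂⟩ q' ⟨hq₁', hq₂'⟩ hr
  have hx₁ : q.1.1 = q'.1.1 := hV₁ hq₁ hq₁' (by rw [(hb q).1, (hb q').1]; exact hr)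
  have hx₂ : q.1.2 = q'.1.2 := hV₂ hq₂ hq₂' (by rw [← q.2, ← q'.2, hx₁])
  exact Subtype.ext (Prod.ext hx₁ hx₂)

theorem injOn_s_comp_bracket {b : ρ.OrbitPairs → A}
    (hb : ∀ q, ρ.anchor q.1.1 = G.r (b q) ∧ q.1.2 = ρ.act q.1.1 (b q))
    {V₁ V₂ : Set X} (hV₁ : Set.InjOn ρ.orbitMap V₁) (hV₂ : Set.InjOn ρ.anchor V₂) :
    Set.InjOn (G.s ∘ b) (Subtype.val ⁻¹' V₁ ×ˢ V₂) := by
  rintro q ⟨hq₁, hq₂⟩ q' ⟨hq₁', hq₂'⟩ hs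
  have hx₂ : q.1.2 = q'.1.2 :=
    hV₂ hq₂ hq₂' (by rw [anchor_snd_eq_s hb, anchor_snd_eq_s hb]; exact hs)
  have hx₁ : q.1.1 = q'.1.1 := hV₁ hq₁ hq₁' (by rw [q.2, q'.2, hx₂])
  exact Subtype.ext (Prod.ext hx₁ hx₂)

end RightAction

theorem bracket_slice_slice_general
    (C : Correspondence H G X)
    (b : { q : X × X // C.right.orbitMap q.1 = C.right.orbitMap q.2 } → A)
    (hb : ∀ q, C.right.anchor q.1.1 = G.r (b q) ∧
      q.1.2 = C.right.act q.1.1 (b q))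
    (hb_open : IsOpenMap b)
    (V₁ V₂ : Set X) (h₁ : C.IsSlice V₁) (h₂ : C.IsSlice V₂) :
    (IsOpen { g : A | ∃ q, q.1.1 ∈ V₁ ∧ q.1.2 ∈ V₂ ∧ g = b q } ∧
      Set.InjOn G.r { g | ∃ q, q.1.1 ∈ V₁ ∧ q.1.2 ∈ V₂ ∧ g = b q } ∧
      Set.InjOn G.s { g | ∃ q, q.1.1 ∈ V₁ ∧ q.1.2 ∈ V₂ ∧ g = b q }) ∧
    (∀ q q' : { q : X × X // C.right.orbitMap q.1 = C.right.orbitMap q.2 },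
      q.1.1 ∈ V₁ → q.1.2 ∈ V₂ → q'.1.1 ∈ V₁ → q'.1.2 ∈ V₂ →
      b q = b q' → q = q') := by
  have hset : { g : A | ∃ q, q.1.1 ∈ V₁ ∧ q.1.2 ∈ V₂ ∧ g = b q } =
      b '' (Subtype.val ⁻¹' V₁ ×ˢ V₂) := by
    ext g
    simp only [Set.mem_ofPred_eq, Set.mem_image, Set.mem_preimage, Set.mem_prod]
    exact exists_congr fun q => by rw [and_assoc, eq_comm]
  have hr := RightAction.injOn_r_comp_bracket hb h₁.2.1 h₂.2.2
  have hs := RightAction.injOn_s_comp_bracket hb h₁.2.2 h₂.2.1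
  rw [hset]
  refine ⟨⟨hb_open _ ((h₁.1.prod h₂.1).preimage continuous_subtype_val),
    hr.image_of_comp, hs.image_of_comp⟩, ?_⟩
  intro q q' hq₁ hq₂ hq₁' hq₂'
  exact hr.of_comp ⟨hq₁, hq₂⟩ ⟨hq₁', hq₂'⟩

/-- Let `X : H ← G` be a groupoid correspondence with bracket map `b`, i.e. for
pairs `(x₁,x₂)` in the same orbit, `b (x₁,x₂) = ⟨x₁|x₂⟩` is the unique `g` with
`x₂ = x₁·g`; `b` is continuous and open.  For slices `V₁, V₂ ⊆ X`, the set
`⟨V₁|V₂⟩ = {⟨x₁|x₂⟩ : x₁ ∈ V₁, x₂ ∈ V₂, p x₁ = p x₂}` is a slice of the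
groupoid `G` (open, with `r` and `s` injective on it), and for each
`g ∈ ⟨V₁|V₂⟩` the elements `x₁ ∈ V₁`, `x₂ ∈ V₂` with `g = ⟨x₁|x₂⟩` are
unique. -/
theorem bracket_slice_slice
    (C : Correspondence H G X)
    (b : { q : X × X // C.right.orbitMap q.1 = C.right.orbitMap q.2 } → A)
    (hb : ∀ q, C.right.anchor q.1.1 = G.r (b q) ∧
      q.1.2 = C.right.act q.1.1 (b q))
    (hb_unique : ∀ q g, C.right.anchor q.1.1 = G.r g →
      q.1.2 = C.right.act q.1.1 g → g = b q)
    (hb_cont : Continuous b) (hb_open : IsOpenMap b)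
    (V₁ V₂ : Set X) (h₁ : C.IsSlice V₁) (h₂ : C.IsSlice V₂) :
    (IsOpen { g : A | ∃ q, q.1.1 ∈ V₁ ∧ q.1.2 ∈ V₂ ∧ g = b q } ∧
      Set.InjOn G.r { g | ∃ q, q.1.1 ∈ V₁ ∧ q.1.2 ∈ V₂ ∧ g = b q } ∧
      Set.InjOn G.s { g | ∃ q, q.1.1 ∈ V₁ ∧ q.1.2 ∈ V₂ ∧ g = b q }) ∧
    (∀ q q' : { q : X × X // C.right.orbitMap q.1 = C.right.orbitMap q.2 },
      q.1.1 ∈ V₁ → q.1.2 ∈ V₂ → q'.1.1 ∈ V₁ → q'.1.2 ∈ V₂ →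
      b q = b q' → q = q') :=
  bracket_slice_slice_general C b hb hb_open V₁ V₂ h₁ h₂

end Statement18
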